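/- Let c = c^cr = 1/(4 log 2) and c₁ = c/2 = 1/(8 log 2). The uniform distribution π(v) = 1/N² is stationary for the Markov chain with transition matrix P (i.e. π·P = π), and there exists N₀ such that for every integer N ≥ N₀ and every integer k ≥ 2, max_{u ∈ V_N} ‖P^k(u,·) − π(·)‖_TV ≤ (1 − c₁)^{k/2 − 1}. -/

import Mathlib

open scoped BigOperators

/-- Vertices of the discrete 2-dimensional torus. -/
abbrev Vtx (N : ℕ) : Type := ZMod N × ZMod N

/-- `ρ_N(i)`: for a residue represented in `{0,…,N−1}`, `ρ_N(i) = i` if `i ≤ N/2`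
and `ρ_N(i) = N − i` otherwise. -/
def rhoN (N : ℕ) (i : ZMod N) : ℕ :=
  if 2 * i.val ≤ N then i.val else N - i.val

/-- Torus distance `ρ(u,v) = ρ_N(u₁ − v₁) + ρ_N(u₂ − v₂)`. -/
def torusDist (N : ℕ) (u v : Vtx N) : ℕ :=
  rhoN N (u.1 - v.1) + rhoN N (u.2 - v.2)

/-- Connection probability `p(u,v) = min(c/(N·ρ(u,v)), 1)` for `u ≠ v`, `p(u,u) = 0`. -/
noncomputable def edgeProb (N : ℕ) (c : ℝ) (u v : Vtx N) : ℝ :=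
  if u = v then 0 else min (c / ((N : ℝ) * (torusDist N u v : ℝ))) 1

/-- The critical value `c^cr = 1/(4 log 2)`. -/
noncomputable def ccr : ℝ := 1 / (4 * Real.log 2)

/-- Transition matrix `P(u,v) = p(u,v)/Z_N` for `u ≠ v`, `P(u,u) = 0`, where
`Z_N = Σ_{w ≠ u} p(u,w)` (this holds automatically since `p(u,u) = 0`). -/
noncomputable def transP (N : ℕ) [NeZero N] (c : ℝ) (u v : Vtx N) : ℝ :=
  edgeProb N c u v / ∑ w : Vtx N, edgeProb N c u w

/-- `k`-step transition probabilities `P^k(u,v)`. -/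
noncomputable def transPk (N : ℕ) [NeZero N] (c : ℝ) : ℕ → Vtx N → Vtx N → ℝ
  | 0, u, v => if u = v then 1 else 0
  | k + 1, u, v => ∑ x : Vtx N, transPk N c k u x * transP N c x v

/-!
`P` is doubly stochastic, since `p` is symmetric and invariant under translations of the
torus; hence `π` is stationary. There are at most `4(r + 1)` points at torus distance `r`,
so `Z_N ≤ 4c(1 + H_N / N)` with `H_N` the harmonic number, while `Z_N ≥ c/2`. Hence every
entry of `P` is at most `2/N` and every off-diagonal one at least `1 / (4N²(1 + H_N / N))`,
so the two-step kernel `P²` dominates `(c^cr / 2) π` for large `N`. Doeblin's argument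
then contracts the `ℓ¹` distance to `π` by `1 - c^cr / 2` every two steps.
-/

open Finset Matrix

section Doeblin

variable {ι : Type*} [Fintype ι]

lemma sum_abs_sub_le_two {μ π : ι → ℝ} (hμ0 : ∀ x, 0 ≤ μ x) (hπ0 : ∀ x, 0 ≤ π x)
    (hμ1 : ∑ x, μ x = 1) (hπ1 : ∑ x, π x = 1) : ∑ x, |μ x - π x| ≤ 2 := by
  calc ∑ x, |μ x - π x| ≤ ∑ x, (μ x + π x) :=
        sum_le_sum fun x _ => abs_le.mpr ⟨by linarith [hμ0 x], by linarith [hπ0 x]⟩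
    _ = 2 := by rw [sum_add_distrib, hμ1, hπ1]; norm_num

lemma sum_abs_vecMul_sub_le {Q : Matrix ι ι ℝ} {π : ι → ℝ} {ε : ℝ}
    (hrow : ∀ x, ∑ v, Q x v = 1) (hπ1 : ∑ x, π x = 1) (hπQ : π ᵥ* Q = π)
    (hmin : ∀ x v, ε * π v ≤ Q x v) {μ : ι → ℝ} (hμ1 : ∑ x, μ x = 1) :
    ∑ v, |(μ ᵥ* Q) v - π v| ≤ (1 - ε) * ∑ x, |μ x - π x| := by
  -- `μ - π` has total mass zero, so `Q` may be replaced by the nonnegative kernel `Q - ε π`.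
  have hdiff : ∀ v, (μ ᵥ* Q) v - π v = ∑ x, (μ x - π x) * (Q x v - ε * π v) := by
    intro v
    conv_lhs => rw [← hπQ]
    simp only [vecMul, dotProduct, mul_sub, sub_mul, sum_sub_distrib, ← sum_mul, hμ1, hπ1,
      sub_self, sub_zero]
  calc ∑ v, |(μ ᵥ* Q) v - π v|
      ≤ ∑ v, ∑ x, |μ x - π x| * (Q x v - ε * π v) := by
        refine sum_le_sum fun v _ => ?_
        rw [hdiff]
        refine (abs_sum_le_sum_abs _ _).trans_eq (sum_congr rfl fun x _ => ?_)
        rw [abs_mul, abs_of_nonneg (sub_nonneg.mpr (hmin x v))]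
    _ = ∑ x, |μ x - π x| * (1 - ε) := by
        rw [sum_comm]
        simp only [← mul_sum, sum_sub_distrib, hrow, hπ1, mul_one]
    _ = (1 - ε) * ∑ x, |μ x - π x| := by rw [← sum_mul, mul_comm]

variable [DecidableEq ι]

lemma le_mul_self_apply {Q : Matrix ι ι ℝ} (hQ : Q ∈ rowStochastic ℝ ι) {v : ι} {a b : ℝ}
    (ha : ∀ x, Q x v ≤ a) (hb : ∀ y, y ≠ v → b ≤ Q y v) (hb0 : 0 ≤ b) (x : ι) :
    (1 - a) * b ≤ (Q * Q) x v := by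
  have hQ0 : ∀ i j, 0 ≤ Q i j := fun i j => nonneg_of_mem_rowStochastic hQ
  calc (1 - a) * b ≤ (1 - Q x v) * b := by gcongr; exact ha x
    _ = ∑ y ∈ univ.erase v, Q x y * b := by
        rw [← sum_mul, sum_erase_eq_sub (mem_univ v), sum_row_of_mem_rowStochastic hQ]
    _ ≤ ∑ y ∈ univ.erase v, Q x y * Q y v :=
        sum_le_sum fun y hy => mul_le_mul_of_nonneg_left (hb y (ne_of_mem_erase hy)) (hQ0 x y)
    _ ≤ ∑ y, Q x y * Q y v :=
        sum_le_sum_of_subset_of_nonneg (erase_subset _ _) fun y _ _ =>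
          mul_nonneg (hQ0 x y) (hQ0 y v)
    _ = (Q * Q) x v := (mul_apply).symm

lemma const_vecMul_of_mem_colStochastic {M : Matrix ι ι ℝ} (hM : M ∈ colStochastic ℝ ι) (a : ℝ) :
    (fun _ => a) ᵥ* M = fun _ => a := by
  ext j
  simp only [vecMul, dotProduct, ← mul_sum, sum_col_of_mem_colStochastic hM, mul_one]

lemma sum_abs_pow_sub_le {Q : Matrix ι ι ℝ} {π : ι → ℝ} {ε : ℝ} (hQ : Q ∈ rowStochastic ℝ ι)
    (hπ0 : ∀ x, 0 ≤ π x) (hπ1 : ∑ x, π x = 1) (hπQ : π ᵥ* Q = π) (hε : ε ≤ 1)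
    (hmin : ∀ x v, ε * π v ≤ (Q * Q) x v) (k : ℕ) (u : ι) :
    ∑ x, |(Q ^ k) u x - π x| ≤ 2 * (1 - ε) ^ (k / 2) := by
  have hQQ : Q * Q ∈ rowStochastic ℝ ι := mul_mem hQ hQ
  have hsplit : Q ^ k = Q ^ (k % 2) * (Q * Q) ^ (k / 2) := by
    rw [← sq, ← pow_mul, ← pow_add, Nat.mod_add_div]
  rw [hsplit]
  induction k / 2 with
  | zero =>
    simpa using sum_abs_sub_le_two (fun x => nonneg_of_mem_rowStochastic (pow_mem hQ _)) hπ0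
      (sum_row_of_mem_rowStochastic (pow_mem hQ _) u) hπ1
  | succ j ih =>
    rw [pow_succ, ← mul_assoc, mul_apply_eq_vecMul]
    calc _ ≤ (1 - ε) * ∑ x, |(Q ^ (k % 2) * (Q * Q) ^ j) u x - π x| :=
          sum_abs_vecMul_sub_le (sum_row_of_mem_rowStochastic hQQ) hπ1
            (by rw [← vecMul_vecMul, hπQ, hπQ]) hmin
            (sum_row_of_mem_rowStochastic (mul_mem (pow_mem hQ _) (pow_mem hQQ _)) u)
      _ ≤ (1 - ε) * (2 * (1 - ε) ^ j) := by gcongr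
      _ = 2 * (1 - ε) ^ (j + 1) := by ring

end Doeblin

section Torus

variable {N : ℕ} [NeZero N]

lemma rhoN_neg (i : ZMod N) : rhoN N (-i) = rhoN N i := by
  rcases eq_or_ne i 0 with rfl | hi
  · simp
  · have hpos : 0 < i.val := Nat.pos_of_ne_zero ((ZMod.val_eq_zero i).not.mpr hi)
    have hlt := ZMod.val_lt i
    unfold rhoN
    rw [ZMod.neg_val, if_neg hi]
    split_ifs <;> omega

lemma two_mul_rhoN_le (i : ZMod N) : 2 * rhoN N i ≤ N := by
  have := ZMod.val_lt i
  unfold rhoN; split_ifs <;> omega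

lemma rhoN_eq_zero_iff {i : ZMod N} : rhoN N i = 0 ↔ i = 0 := by
  have := ZMod.val_lt i
  rw [← ZMod.val_eq_zero]
  unfold rhoN; split_ifs <;> omega

lemma eq_of_rhoN_eq {i j : ZMod N} (h : rhoN N i = rhoN N j)
    (hside : 2 * i.val ≤ N ↔ 2 * j.val ≤ N) : i = j := by
  have := ZMod.val_lt i
  have := ZMod.val_lt j
  apply ZMod.val_injective
  unfold rhoN at h
  split_ifs at h <;> omega

lemma torusDist_comm (u v : Vtx N) : torusDist N u v = torusDist N v u := by
  unfold torusDist
  rw [← rhoN_neg (v.1 - u.1), ← rhoN_neg (v.2 - u.2), neg_sub, neg_sub]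

omit [NeZero N] in
lemma torusDist_add_right (u v a : Vtx N) : torusDist N (u + a) (v + a) = torusDist N u v := by
  simp [torusDist]

lemma torusDist_le (u v : Vtx N) : torusDist N u v ≤ N := by
  have := two_mul_rhoN_le (u.1 - v.1)
  have := two_mul_rhoN_le (u.2 - v.2)
  unfold torusDist; omega

lemma torusDist_eq_zero_iff {u v : Vtx N} : torusDist N u v = 0 ↔ u = v := by
  simp [torusDist, rhoN_eq_zero_iff, sub_eq_zero, Prod.ext_iff]

lemma card_filter_torusDist_eq_le (u : Vtx N) (r : ℕ) :
    #{w | torusDist N u w = r} ≤ 4 * (r + 1) := by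
  -- `w` is determined by `rhoN (u.1 - w.1) ≤ r` and by the halves of the circle in which
  -- `u.1 - w.1` and `u.2 - w.2` lie
  let side : ZMod N → Bool := fun i => decide (2 * i.val ≤ N)
  calc #{w | torusDist N u w = r}
      ≤ #((univ : Finset (Bool × Bool)) ×ˢ range (r + 1)) := by
        refine card_le_card_of_injOn
          (fun w => ((side (u.1 - w.1), side (u.2 - w.2)), rhoN N (u.1 - w.1))) ?_ ?_
        · intro w hw
          have hw : torusDist N u w = r := (mem_filter.mp hw).2
          simp only [coe_product, coe_univ, coe_range, Set.mem_prod, Set.mem_univ, Set.mem_Iio,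
            true_and]
          unfold torusDist at hw
          omega
        · intro w₁ hw₁ w₂ hw₂ heq
          have hw₁ : torusDist N u w₁ = r := (mem_filter.mp hw₁).2
          have hw₂ : torusDist N u w₂ = r := (mem_filter.mp hw₂).2
          simp only [Prod.mk.injEq, side, decide_eq_decide] at heq
          obtain ⟨⟨hs₁, hs₂⟩, hr⟩ := heq
          have h₁ := eq_of_rhoN_eq hr hs₁
          unfold torusDist at hw₁ hw₂
          have h₂ := eq_of_rhoN_eq (by omega) hs₂
          exact Prod.ext (sub_right_injective h₁) (sub_right_injective h₂)
    _ = 4 * (r + 1) := by simp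

lemma sum_inv_torusDist_le (u : Vtx N) :
    ∑ w ∈ univ.erase u, (1 / (torusDist N u w : ℝ)) ≤ 4 * (N + harmonic N) := by
  have hmaps : ∀ w ∈ univ.erase u, torusDist N u w ∈ Icc 1 N := fun w hw =>
    mem_Icc.mpr ⟨Nat.one_le_iff_ne_zero.mpr
      (torusDist_eq_zero_iff.not.mpr (ne_of_mem_erase hw).symm), torusDist_le u w⟩
  rw [← sum_fiberwise_of_maps_to hmaps]
  calc ∑ r ∈ Icc 1 N, ∑ w ∈ univ.erase u with torusDist N u w = r, (1 / (torusDist N u w : ℝ))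
      ≤ ∑ r ∈ Icc 1 N, (4 + 4 * (r : ℝ)⁻¹) := by
        refine sum_le_sum fun r hr => ?_
        have hr0 : (0 : ℝ) < r := by have := (mem_Icc.mp hr).1; positivity
        rw [sum_congr rfl fun w hw => by rw [(mem_filter.mp hw).2], sum_const, nsmul_eq_mul]
        calc (#{w ∈ univ.erase u | torusDist N u w = r} : ℝ) * (1 / r)
            ≤ (4 * (r + 1)) * (1 / r) := by
              gcongr
              exact_mod_cast (card_le_card (filter_subset_filter _ (erase_subset u univ))).trans
                (card_filter_torusDist_eq_le u r)
          _ = 4 + 4 * (r : ℝ)⁻¹ := by field_simp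
    _ = 4 * (N + harmonic N) := by
        simp only [sum_add_distrib, sum_const, Nat.card_Icc, add_tsub_cancel_right, nsmul_eq_mul,
          ← mul_sum, harmonic_eq_sum_Icc, Rat.cast_sum, Rat.cast_inv, Rat.cast_natCast]
        ring

end Torus

section EdgeProb

variable {N : ℕ} {c : ℝ}

lemma edgeProb_nonneg (hc : 0 ≤ c) (u v : Vtx N) : 0 ≤ edgeProb N c u v := by
  unfold edgeProb
  split_ifs
  · rfl
  · exact le_min (by positivity) zero_le_one

lemma edgeProb_add_right (u v a : Vtx N) : edgeProb N c (u + a) (v + a) = edgeProb N c u v := by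
  simp only [edgeProb, torusDist_add_right, add_left_inj]

variable [NeZero N]

lemma edgeProb_comm (u v : Vtx N) : edgeProb N c u v = edgeProb N c v u := by
  simp only [edgeProb, torusDist_comm u v, eq_comm]

lemma edgeProb_le (hc : 0 ≤ c) (u v : Vtx N) : edgeProb N c u v ≤ c / N := by
  unfold edgeProb
  split_ifs with h
  · positivity
  · have hd : (1 : ℝ) ≤ torusDist N u v := by
      exact_mod_cast Nat.one_le_iff_ne_zero.mpr (torusDist_eq_zero_iff.not.mpr h)
    refine (min_le_left _ _).trans (div_le_div_of_nonneg_left hc (mod_cast NeZero.pos N) ?_)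
    exact le_mul_of_one_le_right (Nat.cast_nonneg N) hd

lemma div_sq_le_edgeProb (hc₀ : 0 ≤ c) (hc₁ : c ≤ 1) {u v : Vtx N} (h : u ≠ v) :
    c / (N : ℝ) ^ 2 ≤ edgeProb N c u v := by
  have hN : (1 : ℝ) ≤ N := by exact_mod_cast Nat.one_le_iff_ne_zero.mpr (NeZero.ne N)
  have hd₀ : (0 : ℝ) < torusDist N u v := by
    exact_mod_cast Nat.pos_of_ne_zero (torusDist_eq_zero_iff.not.mpr h)
  have hd : (torusDist N u v : ℝ) ≤ N := by exact_mod_cast torusDist_le u v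
  rw [edgeProb, if_neg h, sq]
  refine le_min (div_le_div_of_nonneg_left hc₀ (by positivity) (by gcongr)) ?_
  rw [div_le_one (by positivity)]
  nlinarith

end EdgeProb

/-- The normalising constant `Z_N`. -/
noncomputable def edgeProbSum (N : ℕ) [NeZero N] (c : ℝ) (u : Vtx N) : ℝ :=
  ∑ w : Vtx N, edgeProb N c u w

noncomputable def transMat (N : ℕ) [NeZero N] (c : ℝ) : Matrix (Vtx N) (Vtx N) ℝ :=
  Matrix.of (transP N c)

section Chain

variable {N : ℕ} [NeZero N] {c : ℝ}

lemma transPk_eq_pow (c : ℝ) (k : ℕ) (u v : Vtx N) :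
    transPk N c k u v = (transMat N c ^ k) u v := by
  induction k generalizing v with
  | zero => simp [transPk, Matrix.one_apply]
  | succ k ih => simp [transPk, pow_succ, Matrix.mul_apply, ih, transMat]

lemma edgeProbSum_eq (u v : Vtx N) : edgeProbSum N c u = edgeProbSum N c v :=
  Fintype.sum_equiv (Equiv.addRight (v - u)) _ _ fun w => by
    rw [Equiv.coe_addRight, ← edgeProb_add_right u w (v - u), add_sub_cancel]

lemma div_two_le_edgeProbSum (hc₀ : 0 ≤ c) (hc₁ : c ≤ 1) (hN : 2 ≤ N) (u : Vtx N) :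
    c / 2 ≤ edgeProbSum N c u := by
  have hN' : (2 : ℝ) ≤ N := by exact_mod_cast hN
  have hcard : ((univ.erase u).card : ℝ) = (N : ℝ) ^ 2 - 1 := by
    rw [card_erase_of_mem (mem_univ u), card_univ, Nat.cast_sub Fintype.card_pos]
    simp [sq]
  calc c / 2 ≤ ((N : ℝ) ^ 2 - 1) * (c / (N : ℝ) ^ 2) := by
        rw [mul_div_assoc', le_div_iff₀ (by positivity)]
        nlinarith [mul_nonneg hc₀ (show (0 : ℝ) ≤ N ^ 2 - 2 by nlinarith)]
    _ = ∑ w ∈ univ.erase u, c / (N : ℝ) ^ 2 := by rw [sum_const, nsmul_eq_mul, hcard]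
    _ ≤ ∑ w ∈ univ.erase u, edgeProb N c u w :=
        sum_le_sum fun w hw => div_sq_le_edgeProb hc₀ hc₁ (ne_of_mem_erase hw).symm
    _ ≤ edgeProbSum N c u :=
        sum_le_sum_of_subset_of_nonneg (erase_subset _ _) fun w _ _ => edgeProb_nonneg hc₀ u w

lemma edgeProbSum_le (hc : 0 ≤ c) (u : Vtx N) :
    edgeProbSum N c u ≤ 4 * c * (1 + harmonic N / N) := by
  have hN : (0 : ℝ) < N := by exact_mod_cast NeZero.pos N
  calc edgeProbSum N c u = ∑ w ∈ univ.erase u, edgeProb N c u w := by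
        rw [edgeProbSum, ← add_sum_erase _ _ (mem_univ u), edgeProb, if_pos rfl, zero_add]
    _ ≤ ∑ w ∈ univ.erase u, c / N * (1 / (torusDist N u w : ℝ)) := by
        refine sum_le_sum fun w hw => ?_
        rw [edgeProb, if_neg (ne_of_mem_erase hw).symm, div_mul_div_comm, mul_one]
        exact min_le_left _ _
    _ ≤ c / N * (4 * (N + harmonic N)) := by
        rw [← mul_sum]
        gcongr
        exact sum_inv_torusDist_le u
    _ = 4 * c * (1 + harmonic N / N) := by field_simp

lemma edgeProbSum_pos (hc : 0 < c) (hN : 2 ≤ N) (u : Vtx N) : 0 < edgeProbSum N c u := by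
  have hcard : 1 < Fintype.card (Vtx N) := by
    rw [Fintype.card_prod, ZMod.card]; nlinarith
  obtain ⟨v, hv⟩ := Fintype.exists_ne_of_one_lt_card hcard u
  have hd : (0 : ℝ) < torusDist N u v := by
    exact_mod_cast Nat.pos_of_ne_zero (torusDist_eq_zero_iff.not.mpr hv.symm)
  have hN : (0 : ℝ) < N := by exact_mod_cast NeZero.pos N
  calc 0 < edgeProb N c u v := by
        rw [edgeProb, if_neg hv.symm]
        exact lt_min (by positivity) one_pos
    _ ≤ edgeProbSum N c u :=
        single_le_sum (fun w _ => edgeProb_nonneg hc.le u w) (mem_univ v)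

lemma transP_comm (u v : Vtx N) : transP N c u v = transP N c v u := by
  rw [transP, transP, edgeProb_comm, ← edgeProbSum, ← edgeProbSum, edgeProbSum_eq u v]

lemma transMat_mem_doublyStochastic (hc : 0 < c) (hN : 2 ≤ N) :
    transMat N c ∈ doublyStochastic ℝ (Vtx N) := by
  have hrow : ∀ u, ∑ v, transP N c u v = 1 := fun u => by
    simp only [transP, ← sum_div]
    exact div_self (edgeProbSum_pos hc hN u).ne'
  refine mem_doublyStochastic_iff_sum.mpr ⟨fun u v => ?_, hrow, fun v => ?_⟩
  · exact div_nonneg (edgeProb_nonneg hc.le u v) (edgeProbSum_pos hc hN u).le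
  · simp only [transMat, Matrix.of_apply, transP_comm _ v]
    exact hrow v

lemma transMat_apply_le (hc₀ : 0 < c) (hc₁ : c ≤ 1) (hN : 2 ≤ N) (u v : Vtx N) :
    transMat N c u v ≤ 2 / N := by
  have hZ := div_two_le_edgeProbSum hc₀.le hc₁ hN u
  calc transMat N c u v ≤ (c / N) / (c / 2) :=
        div_le_div₀ (by positivity) (edgeProb_le hc₀.le u v) (by positivity) hZ
    _ = 2 / N := by field_simp

lemma le_transMat_apply (hc₀ : 0 < c) (hc₁ : c ≤ 1) (hN : 2 ≤ N) {u v : Vtx N} (h : u ≠ v) :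
    1 / (4 * (1 + harmonic N / N)) / (N : ℝ) ^ 2 ≤ transMat N c u v := by
  have hH : (0 : ℝ) ≤ harmonic N := by exact_mod_cast (harmonic_pos (NeZero.ne N)).le
  have hN₀ : (0 : ℝ) < N := by exact_mod_cast NeZero.pos N
  calc 1 / (4 * (1 + harmonic N / N)) / (N : ℝ) ^ 2
      = (c / (N : ℝ) ^ 2) / (4 * c * (1 + harmonic N / N)) := by field_simp
    _ ≤ transMat N c u v :=
        div_le_div₀ (edgeProb_nonneg hc₀.le u v) (div_sq_le_edgeProb hc₀.le hc₁ h)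
          (edgeProbSum_pos hc₀ hN u) (edgeProbSum_le hc₀.le u)

end Chain

lemma pow_div_two_le_rpow {b : ℝ} (hb₀ : 0 < b) (hb₁ : b ≤ 1) (k : ℕ) :
    b ^ (k / 2) ≤ b ^ ((k : ℝ) / 2 - 1) := by
  rw [← Real.rpow_natCast]
  refine Real.rpow_le_rpow_of_exponent_ge hb₀ hb₁ ?_
  have : k ≤ 2 * (k / 2) + 1 := by omega
  have : (k : ℝ) ≤ 2 * ((k / 2 : ℕ) : ℝ) + 1 := by exact_mod_cast this
  linarith

lemma ccr_pos : 0 < ccr := by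
  unfold ccr; positivity

lemma ccr_lt_d3 : ccr < 0.361 := by
  unfold ccr
  rw [div_lt_iff₀ (by positivity)]
  linarith [Real.log_two_gt_d9]

lemma one_add_log_le_div_ten {x : ℝ} (hx : 1000 ≤ x) : 1 + Real.log x ≤ x / 10 := by
  have hx₀ : 0 < x := by linarith
  set s := Real.sqrt x
  have hs : s * s = x := Real.mul_self_sqrt hx₀.le
  have hs₀ : 0 < s := Real.sqrt_pos.mpr hx₀
  have hs31 : 31 ≤ s := Real.le_sqrt_of_sq_le (by linarith)
  have hlog : Real.log x = 2 * Real.log s := by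
    rw [← hs, Real.log_mul hs₀.ne' hs₀.ne']; ring
  have := Real.log_le_sub_one_of_pos hs₀
  nlinarith

/-- By `transMat_apply_le` and `le_transMat_apply`, `P²` dominates the right-hand side times `π`;
it tends to `1/4`, and `c^cr / 2 < 1/4`. -/
lemma ccr_div_two_le {N : ℕ} (hN : 1000 ≤ N) :
    ccr / 2 ≤ (1 - 2 / N) * (1 / (4 * (1 + harmonic N / N))) := by
  have hN' : (1000 : ℝ) ≤ N := by exact_mod_cast hN
  have hH : (harmonic N : ℝ) ≤ N / 10 :=
    (harmonic_le_one_add_log N).trans (one_add_log_le_div_ten hN')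
  have hH₀ : (0 : ℝ) ≤ harmonic N := by exact_mod_cast (harmonic_pos (by omega)).le
  have h2N : 2 / (N : ℝ) ≤ 1 / 500 := by
    rw [div_le_div_iff₀ (by positivity) (by norm_num)]; linarith
  have hHN : (harmonic N : ℝ) / N ≤ 1 / 10 := by
    rw [div_le_div_iff₀ (by positivity) (by norm_num)]; linarith
  calc ccr / 2 ≤ (1 - 1 / 500) * (1 / (4 * (1 + 1 / 10))) := by linarith [ccr_lt_d3]
    _ ≤ (1 - 2 / N) * (1 / (4 * (1 + harmonic N / N))) := by gcongr; linarith

lemma ccr_div_two_mul_le_transMat_mul_self {N : ℕ} [NeZero N] (hN : 1000 ≤ N) (x v : Vtx N) :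
    ccr / 2 * (1 / (N : ℝ) ^ 2) ≤ (transMat N ccr * transMat N ccr) x v := by
  have hN2 : 2 ≤ N := by omega
  have hc₁ : ccr ≤ 1 := by linarith [ccr_lt_d3]
  have hH₀ : (0 : ℝ) ≤ harmonic N := by exact_mod_cast (harmonic_pos (NeZero.ne N)).le
  have hrow := (mem_doublyStochastic_iff_mem_rowStochastic_and_mem_colStochastic.mp
    (transMat_mem_doublyStochastic ccr_pos hN2)).1
  calc ccr / 2 * (1 / (N : ℝ) ^ 2)
      ≤ (1 - 2 / N) * (1 / (4 * (1 + harmonic N / N))) * (1 / (N : ℝ) ^ 2) := by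
        gcongr; exact ccr_div_two_le hN
    _ = (1 - 2 / N) * (1 / (4 * (1 + harmonic N / N)) / (N : ℝ) ^ 2) := by ring
    _ ≤ (transMat N ccr * transMat N ccr) x v :=
        le_mul_self_apply hrow (fun y => transMat_apply_le ccr_pos hc₁ hN2 y v)
          (fun y hy => le_transMat_apply ccr_pos hc₁ hN2 hy) (by positivity) x

/-- With `c = c^cr = 1/(4 log 2)` and `c₁ = c/2`: the uniform distribution
`π(v) = 1/N²` is stationary for the chain with transition matrix `P`, and there is `N₀`
such that for all `N ≥ N₀` and all `k ≥ 2`,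
`max_u ‖P^k(u,·) − π‖_TV ≤ (1 − c₁)^{k/2 − 1}`. -/
theorem stmt10 :
    (∀ (N : ℕ) [NeZero N], 2 ≤ N → ∀ v : Vtx N,
      ∑ u : Vtx N, (1 / (N : ℝ) ^ 2) * transP N ccr u v = 1 / (N : ℝ) ^ 2) ∧
    ∃ N₀ : ℕ, ∀ (N : ℕ) [NeZero N], N₀ ≤ N →
      ∀ k : ℕ, 2 ≤ k → ∀ u : Vtx N,
        (1 / 2) * ∑ x : Vtx N, |transPk N ccr k u x - 1 / (N : ℝ) ^ 2| ≤
          (1 - ccr / 2) ^ ((k : ℝ) / 2 - 1) := by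
  refine ⟨fun N _ hN v => ?_, 1000, fun N _ hN k _ u => ?_⟩
  · have hcol := (mem_doublyStochastic_iff_mem_rowStochastic_and_mem_colStochastic.mp
      (transMat_mem_doublyStochastic ccr_pos hN)).2
    exact congrFun (const_vecMul_of_mem_colStochastic hcol _) v
  · obtain ⟨hrow, hcol⟩ := mem_doublyStochastic_iff_mem_rowStochastic_and_mem_colStochastic.mp
      (transMat_mem_doublyStochastic ccr_pos (by omega : 2 ≤ N))
    have hπ : ∑ _x : Vtx N, 1 / (N : ℝ) ^ 2 = 1 := by
      rw [sum_const, card_univ, Fintype.card_prod, ZMod.card, nsmul_eq_mul, Nat.cast_mul, ← sq]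
      field_simp
    have hdist := sum_abs_pow_sub_le hrow (fun _ => by positivity) hπ
      (const_vecMul_of_mem_colStochastic hcol _) (by linarith [ccr_lt_d3])
      (ccr_div_two_mul_le_transMat_mul_self hN) k u
    simp only [transPk_eq_pow]
    calc (1 / 2) * ∑ x, |(transMat N ccr ^ k) u x - 1 / (N : ℝ) ^ 2| ≤ (1 - ccr / 2) ^ (k / 2) := by
          linarith
      _ ≤ (1 - ccr / 2) ^ ((k : ℝ) / 2 - 1) :=
          pow_div_two_le_rpow (by linarith [ccr_lt_d3]) (by linarith [ccr_pos]) k
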